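/- arXiv:0910.2132 — 2 statements merged into one kernel-verified Lean document; each statement's English description precedes it below -/
import Mathlib

section
/- If M is an ord-absolute model, then its ord-collapse ordcol(M) is ord-transitive, and ordcol^M is the identity map if and only if M is already ord-transitive. -/
namespace NepPaper

/-- `x` is a (von Neumann) ordinal. -/
def IsOrd (x : ZFSet) : Prop := x.IsOrdinal

/-- `M` believes that `x` is an ordinal: the Δ₀ formula "x is transitive and
∈-trichotomous" relativized to `M` (all quantifiers range over `M`). -/
def OrdIn (M x : ZFSet) : Prop :=
  (∀ y ∈ M, y ∈ x → ∀ z ∈ M, z ∈ y → z ∈ x) ∧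
  (∀ y ∈ M, ∀ z ∈ M, y ∈ x → z ∈ x → y ∈ z ∨ y = z ∨ z ∈ y)

/-- `M` satisfies the extensionality axiom. -/
def Extensional (M : ZFSet) : Prop :=
  ∀ x ∈ M, ∀ y ∈ M, (∀ z ∈ M, z ∈ x ↔ z ∈ y) → x = y

/-- A (sufficient) fragment of ZFC*, relativized to `M`: extensionality,
empty set, pairing, union and set difference. -/
def ZFCfrag (M : ZFSet) : Prop :=
  Extensional M ∧
  (∃ e ∈ M, ∀ z ∈ M, z ∉ e) ∧
  (∀ x ∈ M, ∀ y ∈ M, ∃ u ∈ M, ∀ z ∈ M, (z ∈ u ↔ (z = x ∨ z = y))) ∧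
  (∀ x ∈ M, ∀ y ∈ M, ∃ u ∈ M, ∀ z ∈ M, (z ∈ u ↔ (z ∈ x ∨ z ∈ y))) ∧
  (∀ x ∈ M, ∀ y ∈ M, ∃ u ∈ M, ∀ z ∈ M, (z ∈ u ↔ (z ∈ x ∧ z ∉ y)))

/-- `M` believes that `y` is the set ω (the least inductive set), relativized to `M`. -/
def OmegaIn (M y : ZFSet) : Prop :=
  OrdIn M y ∧ (∅ : ZFSet) ∈ y ∧ (∀ z ∈ M, z ∈ y → insert z z ∈ y) ∧
  ∀ w ∈ M, ((∅ : ZFSet) ∈ w ∧ ∀ z ∈ M, z ∈ w → insert z z ∈ w) →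
    ∀ z ∈ M, z ∈ y → z ∈ w

/-- `M` is ord-absolute: it is a model (of a sufficient fragment of ZFC),
ω^M = ω, ω ⊆ M, and ON^M ⊆ ON. -/
def OrdAbsolute (M : ZFSet) : Prop :=
  ZFCfrag M ∧ ZFSet.omega ∈ M ∧ OmegaIn M ZFSet.omega ∧
  (∀ n ∈ ZFSet.omega, n ∈ M) ∧ (∀ x ∈ M, OrdIn M x → IsOrd x)

/-- `M` is ord-transitive: ord-absolute, and every non-ordinal element is a subset. -/
def OrdTransitive (M : ZFSet) : Prop :=
  OrdAbsolute M ∧ ∀ x ∈ M, ¬ IsOrd x → ∀ t ∈ x, t ∈ M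

/-- `i` is the ord-collapse of `M`: `i x = x` for ordinals `x`, and
`i x = {i t : t ∈ x ∩ M}` otherwise.  (This recursion on ∈ has a unique solution.) -/
def OrdcolChar (M : ZFSet) (i : ZFSet → ZFSet) : Prop :=
  (∀ x : ZFSet, IsOrd x → i x = x) ∧
  (∀ x : ZFSet, ¬ IsOrd x → ∀ z : ZFSet, (z ∈ i x ↔ ∃ t ∈ x, t ∈ M ∧ i t = z))

/-- `j` is the transitive (Mostowski) collapse of `M`:
`j x = {j t : t ∈ x ∩ M}` for all `x`. -/
def CollapseChar (M : ZFSet) (j : ZFSet → ZFSet) : Prop :=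
  ∀ x z : ZFSet, z ∈ j x ↔ ∃ t ∈ x, t ∈ M ∧ j t = z

/-!
The ord-collapse `i` of an ord-absolute `M` never sends a non-ordinal of `M` to an ordinal:
otherwise, by ∈-induction, `i x = x ∩ M` would be an ordinal, so `M` would believe that `x` is
an ordinal, and `ON^M ⊆ ON` would make `x` one. Together with extensionality of `M` this makes `i`
injective on `M`, hence an ∈-isomorphism of `M` onto `ordcol(M)`. The fragment of ZFC and the
formula "x is an ordinal" transfer along it, the ordinals (ω among them) are fixed, and a
non-ordinal of `ordcol(M)` is a subset of `ordcol(M)` by construction. Conversely, when `M` is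
ord-transitive, `i x = x ∩ M = x` by ∈-induction.
-/

open ZFSet

theorem mk_ofNat_mem_omega (n : ℕ) : mk (PSet.ofNat n) ∈ omega :=
  ⟨⟨n⟩, PSet.Equiv.rfl⟩

theorem mem_omega_iff {z : ZFSet} : z ∈ omega ↔ ∃ n : ℕ, z = mk (PSet.ofNat n) := by
  induction z using Quotient.inductionOn with
  | h x =>
    constructor
    · rintro ⟨⟨n⟩, h⟩
      exact ⟨n, Quotient.sound h⟩
    · rintro ⟨n, h⟩
      rw [h]
      exact mk_ofNat_mem_omega n

theorem isOrdinal_omega : omega.IsOrdinal := by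
  refine isOrdinal_iff_forall_mem_isOrdinal.2 ⟨fun x hx y hy => ?_, fun x hx => ?_⟩
  all_goals obtain ⟨n, rfl⟩ := mem_omega_iff.1 hx
  · induction n with
    | zero => exact absurd hy (notMem_empty y)
    | succ n ih =>
      change y ∈ insert (mk (PSet.ofNat n)) (mk (PSet.ofNat n)) at hy
      rcases mem_insert_iff.1 hy with rfl | hy
      · exact mk_ofNat_mem_omega n
      · exact ih (mk_ofNat_mem_omega n) hy
  · induction n with
    | zero => exact isOrdinal_empty
    | succ n ih => exact isOrdinal_succ (ih (mk_ofNat_mem_omega n))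

theorem omegaIn_omega {N : ZFSet} (hN : ∀ n ∈ omega, n ∈ N) : OmegaIn N omega := by
  refine ⟨⟨fun y _ hy z _ hz => isOrdinal_omega.mem_trans hz hy,
    fun y _ z _ hy hz => (isOrdinal_omega.mem hy).mem_trichotomous (isOrdinal_omega.mem hz)⟩,
    omega_zero, fun z _ => omega_succ, ?_⟩
  rintro w - ⟨hw0, hwsucc⟩ z - hz
  obtain ⟨n, rfl⟩ := mem_omega_iff.1 hz
  induction n with
  | zero => exact hw0
  | succ n ih => exact hwsucc _ (hN _ (mk_ofNat_mem_omega n)) (ih (mk_ofNat_mem_omega n))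

theorem ordIn_of_isOrd_inter {M x : ZFSet} (h : IsOrd (x ∩ M)) : OrdIn M x := by
  constructor
  · intro y hyM hyx z hzM hzy
    exact (mem_inter.1 (h.mem_trans hzy (mem_inter.2 ⟨hyx, hyM⟩))).1
  · intro y hyM z hzM hyx hzx
    exact (h.mem (mem_inter.2 ⟨hyx, hyM⟩)).mem_trichotomous (h.mem (mem_inter.2 ⟨hzx, hzM⟩))

structure MemIso (M N : ZFSet) (f : ZFSet → ZFSet) : Prop where
  mapsTo : ∀ x ∈ M, f x ∈ N
  surjOn : ∀ y ∈ N, ∃ x ∈ M, f x = y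
  injOn : ∀ {x y}, x ∈ M → y ∈ M → f x = f y → x = y
  mem_iff : ∀ {x y}, x ∈ M → y ∈ M → (f x ∈ f y ↔ x ∈ y)

namespace MemIso

variable {M N : ZFSet} {f : ZFSet → ZFSet}

theorem forall_mem_iff (h : MemIso M N f) {P : ZFSet → Prop} :
    (∀ y ∈ N, P y) ↔ ∀ x ∈ M, P (f x) :=
  ⟨fun hP x hx => hP _ (h.mapsTo x hx), fun hP y hy => by
    obtain ⟨x, hx, rfl⟩ := h.surjOn y hy
    exact hP x hx⟩

theorem apply_eq_apply_iff (h : MemIso M N f) {x y : ZFSet} (hx : x ∈ M) (hy : y ∈ M) :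
    f x = f y ↔ x = y :=
  ⟨h.injOn hx hy, congrArg f⟩

theorem extensional_iff (h : MemIso M N f) : Extensional N ↔ Extensional M := by
  simp +contextual only [Extensional, h.forall_mem_iff, h.mem_iff, h.apply_eq_apply_iff]

theorem zfcFrag_iff (h : MemIso M N f) : ZFCfrag N ↔ ZFCfrag M := by
  -- Turning `∃ u ∈ M, _` into `¬∀ u, u ∈ M → ¬_` lets contextual `simp` use `u ∈ M`.
  simp only [ZFCfrag, h.extensional_iff, ← not_forall_not (α := ZFSet), not_and]
  simp +contextual only [h.forall_mem_iff, h.mem_iff, h.apply_eq_apply_iff]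

theorem ordIn_iff (h : MemIso M N f) {x : ZFSet} (hx : x ∈ M) : OrdIn N (f x) ↔ OrdIn M x := by
  simp +contextual only [OrdIn, h.forall_mem_iff, h.mem_iff, h.apply_eq_apply_iff, hx]

end MemIso

namespace OrdcolChar

variable {M : ZFSet} {i : ZFSet → ZFSet}

theorem apply_mem_apply (hi : OrdcolChar M i) {x y : ZFSet} (hx : x ∈ M) (hxy : x ∈ y) :
    i x ∈ i y := by
  by_cases hy : IsOrd y
  · rw [hi.1 x (hy.mem hxy), hi.1 y hy]
    exact hxy
  · exact (hi.2 y hy (i x)).2 ⟨x, hxy, hx, rfl⟩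

theorem isOrd_of_isOrd_apply (hi : OrdcolChar M i) (habs : ∀ x ∈ M, OrdIn M x → IsOrd x)
    {x : ZFSet} (hx : x ∈ M) (hix : IsOrd (i x)) : IsOrd x := by
  induction x using ZFSet.inductionOn with
  | _ x ih =>
  by_contra hxo
  have fixed : ∀ t ∈ x, t ∈ M → i t = t := fun t ht htM =>
    hi.1 t (ih t ht htM (hix.mem (hi.apply_mem_apply htM ht)))
  have hix_eq : i x = x ∩ M := ZFSet.ext fun z => by
    rw [hi.2 x hxo, mem_inter]
    constructor
    · rintro ⟨t, ht, htM, rfl⟩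
      rw [fixed t ht htM]
      exact ⟨ht, htM⟩
    · rintro ⟨hz, hzM⟩
      exact ⟨z, hz, hzM, fixed z hz hzM⟩
  exact hxo (habs x hx (ordIn_of_isOrd_inter (hix_eq ▸ hix)))

theorem isOrd_apply_iff (hi : OrdcolChar M i) (habs : ∀ x ∈ M, OrdIn M x → IsOrd x)
    {x : ZFSet} (hx : x ∈ M) : IsOrd (i x) ↔ IsOrd x :=
  ⟨hi.isOrd_of_isOrd_apply habs hx, fun h => (hi.1 x h).symm ▸ h⟩

theorem injOn (hi : OrdcolChar M i) (hext : Extensional M) (habs : ∀ x ∈ M, OrdIn M x → IsOrd x)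
    {x y : ZFSet} (hx : x ∈ M) (hy : y ∈ M) (h : i x = i y) : x = y := by
  induction x using ZFSet.inductionOn generalizing y with
  | _ x ih =>
  have hord : IsOrd x ↔ IsOrd y := by
    rw [← hi.isOrd_apply_iff habs hx, ← hi.isOrd_apply_iff habs hy, h]
  by_cases hxo : IsOrd x
  · rw [← hi.1 x hxo, ← hi.1 y (hord.1 hxo), h]
  have hyo : ¬IsOrd y := mt hord.2 hxo
  refine hext x hx y hy fun z hz => ⟨fun hzx => ?_, fun hzy => ?_⟩
  · obtain ⟨t, ht, htM, hti⟩ := (hi.2 y hyo (i z)).1 (h ▸ hi.apply_mem_apply hz hzx)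
    rwa [ih z hzx hz htM hti.symm]
  · obtain ⟨t, ht, htM, hti⟩ := (hi.2 x hxo (i z)).1 (h.symm ▸ hi.apply_mem_apply hz hzy)
    rwa [← ih t ht htM hz hti]

theorem apply_mem_apply_iff (hi : OrdcolChar M i) (hext : Extensional M)
    (habs : ∀ x ∈ M, OrdIn M x → IsOrd x) {x y : ZFSet} (hx : x ∈ M) :
    i x ∈ i y ↔ x ∈ y := by
  refine ⟨fun h => ?_, hi.apply_mem_apply hx⟩
  by_cases hyo : IsOrd y
  · rw [hi.1 y hyo] at h
    rwa [hi.1 x ((hi.isOrd_apply_iff habs hx).1 (hyo.mem h))] at h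
  · obtain ⟨t, ht, htM, hti⟩ := (hi.2 y hyo (i x)).1 h
    rwa [← hi.injOn hext habs htM hx hti]

theorem memIso (hi : OrdcolChar M i) (hext : Extensional M)
    (habs : ∀ x ∈ M, OrdIn M x → IsOrd x) {M' : ZFSet}
    (hM' : ∀ z : ZFSet, z ∈ M' ↔ ∃ x ∈ M, i x = z) : MemIso M M' i where
  mapsTo x hx := (hM' _).2 ⟨x, hx, rfl⟩
  surjOn y hy := (hM' y).1 hy
  injOn := hi.injOn hext habs
  mem_iff hx _ := hi.apply_mem_apply_iff hext habs hx

theorem ordAbsolute_image (hi : OrdcolChar M i) (hM : OrdAbsolute M) {M' : ZFSet}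
    (hM' : ∀ z : ZFSet, z ∈ M' ↔ ∃ x ∈ M, i x = z) : OrdAbsolute M' := by
  obtain ⟨hfrag, hωM, -, hωsub, habs⟩ := hM
  have e := hi.memIso hfrag.1 habs hM'
  have hωsub' : ∀ n ∈ omega, n ∈ M' := fun n hn =>
    hi.1 n (isOrdinal_omega.mem hn) ▸ e.mapsTo n (hωsub n hn)
  refine ⟨e.zfcFrag_iff.2 hfrag, hi.1 _ isOrdinal_omega ▸ e.mapsTo _ hωM, omegaIn_omega hωsub',
    hωsub', fun x' hx' hord => ?_⟩
  obtain ⟨x, hx, rfl⟩ := e.surjOn x' hx'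
  exact (hi.isOrd_apply_iff habs hx).2 (habs x hx ((e.ordIn_iff hx).1 hord))

theorem ordTransitive_image (hi : OrdcolChar M i) (hM : OrdAbsolute M) {M' : ZFSet}
    (hM' : ∀ z : ZFSet, z ∈ M' ↔ ∃ x ∈ M, i x = z) : OrdTransitive M' := by
  refine ⟨hi.ordAbsolute_image hM hM', fun x' hx' hxo t ht => ?_⟩
  obtain ⟨x, hx, rfl⟩ := (hM' x').1 hx'
  have hxo : ¬IsOrd x := fun h => hxo ((hi.1 x h).symm ▸ h)
  obtain ⟨s, -, hs, rfl⟩ := (hi.2 x hxo t).1 ht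
  exact (hM' _).2 ⟨s, hs, rfl⟩

theorem apply_eq_self (hi : OrdcolChar M i) (hsub : ∀ x ∈ M, ¬IsOrd x → ∀ t ∈ x, t ∈ M)
    {x : ZFSet} (hx : x ∈ M) : i x = x := by
  induction x using ZFSet.inductionOn with
  | _ x ih =>
  by_cases hxo : IsOrd x
  · exact hi.1 x hxo
  refine ZFSet.ext fun z => ?_
  rw [hi.2 x hxo]
  constructor
  · rintro ⟨t, ht, htM, rfl⟩
    rwa [ih t ht htM]
  · intro hz
    exact ⟨z, hz, hsub x hx hxo z hz, ih z hz (hsub x hx hxo z hz)⟩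

end OrdcolChar

/-- For ord-absolute `M`, the ord-collapse `ordcol(M)` is
ord-transitive, and `ordcol^M` is the identity (on `M`) iff `M` is already
ord-transitive. -/
theorem ordcol_ordTransitive (M : ZFSet) (hM : OrdAbsolute M)
    (i : ZFSet → ZFSet) (hi : OrdcolChar M i)
    (M' : ZFSet) (hM' : ∀ z : ZFSet, z ∈ M' ↔ ∃ x ∈ M, i x = z) :
    OrdTransitive M' ∧ ((∀ x ∈ M, i x = x) ↔ OrdTransitive M) := by
  refine ⟨hi.ordTransitive_image hM hM', fun hid => ?_, fun hMT x hx => hi.apply_eq_self hMT.2 hx⟩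
  have hM'_eq : M' = M := ZFSet.ext fun z => by
    rw [hM']
    exact ⟨by rintro ⟨x, hx, rfl⟩; rwa [hid x hx], fun hz => ⟨z, hz, hid z hz⟩⟩
  exact hM'_eq ▸ hi.ordTransitive_image hM hM'

end NepPaper
end

section
/- (Halving) For every i-creature φ there exists an i-creature half(φ) ≤ φ such that: (1) nor(half(φ)) ≥ ⌈nor(φ)/2⌉, and (2) whenever ψ ≤ half(φ) is an i-creature with nor(ψ) > 0, there exists an i-creature ψ' ≤ φ with nor(ψ') ≥ ⌈nor(φ)/2⌉ and val(ψ') ⊆ val(ψ). -/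
namespace NepPaper

/-- An `i`-creature (with `bound = F i`): a function `f` on subsets of a
nonempty set `val ⊆ {0, …, bound - 1}` which is monotonic, satisfies bigness,
vanishes on `∅` and is `≤ 1` on singletons. -/
structure Creature (bound : ℕ) where
  val : Finset ℕ
  f : Finset ℕ → ℕ
  val_nonempty : val.Nonempty
  val_lt : ∀ x ∈ val, x < bound
  mono : ∀ b c : Finset ℕ, b ⊆ c → c ⊆ val → f b ≤ f c
  big : ∀ b c : Finset ℕ, b ⊆ val → c ⊆ val → f (b ∪ c) ≤ max (f b) (f c) + 1
  f_empty : f ∅ = 0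
  f_singleton : ∀ x ∈ val, f {x} ≤ 1

/-- The norm of a creature: `nor(φ) = φ(val φ)`. -/
def Creature.nor {n : ℕ} (φ : Creature n) : ℕ := φ.f φ.val

/-- `ψ` is stronger than `φ` (i.e. `ψ ≤ φ`). -/
def Creature.Stronger {n : ℕ} (ψ φ : Creature n) : Prop :=
  ψ.val ⊆ φ.val ∧ ∀ b : Finset ℕ, b ⊆ ψ.val → ψ.f b ≤ φ.f b

/-- `k*_i = ∏_{j < i} F j`. -/
def kstar (F : ℕ → ℕ) (i : ℕ) : ℕ := (Finset.range i).prod F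

/-- The norm condition for conditions of the creature forcing `P`:
`liminf nor(p i)^(1/k*_i) = ∞`, i.e. for every `m` eventually
`nor (p i) > m ^ (k*_i)`. -/
def NormCond (F : ℕ → ℕ) (p : ∀ i : ℕ, Creature (F i)) : Prop :=
  ∀ m : ℕ, ∃ N : ℕ, ∀ i : ℕ, N ≤ i → m ^ kstar F i < (p i).nor


/-! Lowering every value of `φ` by `⌊nor φ / 2⌋` keeps monotonicity and bigness and leaves norm
`⌈nor φ / 2⌉`. If `ψ ≤ half φ` has positive norm, then `φ (val ψ)` exceeds `⌊nor φ / 2⌋`, so `φ`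
itself, restricted to `val ψ`, is a creature of norm at least `⌈nor φ / 2⌉`. -/

namespace Creature

variable {n : ℕ}

def half (φ : Creature n) : Creature n where
  val := φ.val
  f b := φ.f b - φ.nor / 2
  val_nonempty := φ.val_nonempty
  val_lt := φ.val_lt
  mono b c hbc hc := Nat.sub_le_sub_right (φ.mono b c hbc hc) _
  big b c hb hc := by
    have := φ.big b c hb hc
    omega
  f_empty := by simp [φ.f_empty]
  f_singleton x hx := (Nat.sub_le _ _).trans (φ.f_singleton x hx)

theorem half_stronger (φ : Creature n) : φ.half.Stronger φ :=
  ⟨subset_rfl, fun _ _ => Nat.sub_le _ _⟩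

theorem nor_half (φ : Creature n) : φ.half.nor = φ.nor - φ.nor / 2 := rfl

theorem div_two_lt_f_val_of_stronger_half {φ ψ : Creature n} (hψ : ψ.Stronger φ.half)
    (hpos : 0 < ψ.nor) : φ.nor / 2 < φ.f ψ.val := by
  have : ψ.nor ≤ φ.f ψ.val - φ.nor / 2 := hψ.2 ψ.val subset_rfl
  omega

def restrict (φ : Creature n) (s : Finset ℕ) (hs : s.Nonempty) (hsφ : s ⊆ φ.val) :
    Creature n where
  val := s
  f := φ.f
  val_nonempty := hs
  val_lt x hx := φ.val_lt x (hsφ hx)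
  mono b c hbc hc := φ.mono b c hbc (hc.trans hsφ)
  big b c hb hc := φ.big b c (hb.trans hsφ) (hc.trans hsφ)
  f_empty := φ.f_empty
  f_singleton x hx := φ.f_singleton x (hsφ hx)

theorem restrict_stronger (φ : Creature n) (s : Finset ℕ) (hs : s.Nonempty) (hsφ : s ⊆ φ.val) :
    (φ.restrict s hs hsφ).Stronger φ :=
  ⟨hsφ, fun _ _ => le_rfl⟩

theorem nor_restrict (φ : Creature n) (s : Finset ℕ) (hs : s.Nonempty) (hsφ : s ⊆ φ.val) :
    (φ.restrict s hs hsφ).nor = φ.f s := rfl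

end Creature

/-- Halving: For every `i`-creature `φ` there is
`half(φ) ≤ φ` with `nor (half φ) ≥ ⌈nor φ / 2⌉` such that every `ψ ≤ half(φ)`
with `nor ψ > 0` can be "un-halved" to some `ψ' ≤ φ` with
`nor ψ' ≥ ⌈nor φ / 2⌉` and `val ψ' ⊆ val ψ`. -/
theorem creature_halving (n : ℕ) (φ : Creature n) :
    ∃ h : Creature n, h.Stronger φ ∧ (φ.nor + 1) / 2 ≤ h.nor ∧
      ∀ ψ : Creature n, ψ.Stronger h → 0 < ψ.nor →
        ∃ ψ' : Creature n, ψ'.Stronger φ ∧ (φ.nor + 1) / 2 ≤ ψ'.nor ∧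
          ψ'.val ⊆ ψ.val := by
  refine ⟨φ.half, φ.half_stronger, by rw [φ.nor_half]; omega, fun ψ hψ hpos => ?_⟩
  have hψφ : ψ.val ⊆ φ.val := hψ.1.trans φ.half_stronger.1
  have hlt := Creature.div_two_lt_f_val_of_stronger_half hψ hpos
  refine ⟨φ.restrict ψ.val ψ.val_nonempty hψφ, φ.restrict_stronger _ _ _, ?_, subset_rfl⟩
  rw [φ.nor_restrict]
  omega

end NepPaper
end
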